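/- arXiv:1912.06017 — 3 statements merged into one kernel-verified Lean document; each statement's English description precedes it below -/
import Mathlib

section
/- Let g : F(u,v) → Z ⋊ Z be the homomorphism with g(u) = (1,0) and g(v) = (0,1). For integers k and l with l ≥ 1, the element Γ_{k,l} = v^k u^l v u^l v^{-k-1} of F(u,v) satisfies Γ_{k,l} = ∏_{i=1}^{l} B_{k, l-i}, where B_{k,j} = v^k u^j (u v u v⁻¹) u^{-j} v^{-k} and the product is taken in order of increasing i. -/
namespace KleinBU

/-- Generator `u` of the free group `F(u,v)`. -/
def u : FreeGroup Bool := FreeGroup.of true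

/-- Generator `v` of the free group `F(u,v)`. -/
def v : FreeGroup Bool := FreeGroup.of false

/-- The element `B = u v u v⁻¹`. -/
def Bel : FreeGroup Bool := u * v * u * v⁻¹

/-- The element `B_{k,l} = v^k u^l B u^{-l} v^{-k}`. -/
def Bkl (k l : ℤ) : FreeGroup Bool := v ^ k * u ^ l * Bel * u ^ (-l) * v ^ (-k)

end KleinBU

/-! Conjugation by `v^k` reduces the identity to `k = 0`. Writing `C_j = u^j v u^j v⁻¹`, one has
`u^j B u^{-j} = C_{j+1} C_j⁻¹`, so the product `∏_{j = l-1}^{0} u^j B u^{-j}` telescopes to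
`C_l C_0⁻¹ = C_l`. -/

section Telescope

variable {G : Type*} [Group G]

theorem zpow_conj_mul_mul_mul_inv (a b : G) (m : ℤ) :
    a ^ m * (a * b * a * b⁻¹) * a ^ (-m)
      = a ^ (m + 1) * b * a ^ (m + 1) * b⁻¹ / (a ^ m * b * a ^ m * b⁻¹) := by
  rw [div_eq_mul_inv]
  group

theorem prod_range_zpow_conj_mul_mul_mul_inv (a b : G) (n : ℕ) :
    ((List.range n).map fun i : ℕ =>
        a ^ ((n : ℤ) - 1 - i) * (a * b * a * b⁻¹) * a ^ (-((n : ℤ) - 1 - i))).prod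
      = a ^ (n : ℤ) * b * a ^ (n : ℤ) * b⁻¹ := by
  set c : ℤ → G := fun m => a ^ m * b * a ^ m * b⁻¹
  have hterm (i : ℕ) :
      a ^ ((n : ℤ) - 1 - i) * (a * b * a * b⁻¹) * a ^ (-((n : ℤ) - 1 - i))
        = c (n - i) / c (n - (i + 1 : ℕ)) := by
    have hsucc : (n : ℤ) - 1 - i + 1 = n - i := by ring
    have hpred : (n : ℤ) - (i + 1 : ℕ) = n - 1 - i := by push_cast; ring
    rw [zpow_conj_mul_mul_mul_inv, hsucc, hpred]
  simp only [hterm]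
  rw [List.prod_range_div' n fun i : ℕ => c (n - i)]
  simp [c]

end Telescope

open KleinBU in
/-- For `l ≥ 1`, the element `Γ_{k,l} = v^k u^l v u^l v^{-k-1}` equals the ordered product
`∏_{i=1}^{l} B_{k, l-i}` (in order of increasing `i`). -/
theorem Gamma_eq_prod (k l : ℤ) (hl : 1 ≤ l) :
    v ^ k * u ^ l * v * u ^ l * v ^ (-k - 1)
      = ((List.range l.toNat).map (fun i => Bkl k (l - 1 - (i : ℤ)))).prod := by
  obtain ⟨n, rfl⟩ : ∃ n : ℕ, l = n := ⟨l.toNat, (Int.toNat_of_nonneg (by omega)).symm⟩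
  -- In the statement, `(i : ℤ)` coerces the whole list `List.range l.toNat` to `List ℤ`.
  have hcast : ((List.range n : List ℕ) : List ℤ) = (List.range n).map Nat.cast :=
    List.flatMap_pure_eq_map _ _
  have hBkl (j : ℤ) : Bkl k j = MulAut.conj (v ^ k) (u ^ j * Bel * u ^ (-j)) := by
    simp only [Bkl, MulAut.conj_apply]
    group
  calc v ^ k * u ^ (n : ℤ) * v * u ^ (n : ℤ) * v ^ (-k - 1)
      = MulAut.conj (v ^ k) (u ^ (n : ℤ) * v * u ^ (n : ℤ) * v⁻¹) := by
        simp only [MulAut.conj_apply]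
        group
    _ = _ := by
        rw [← prod_range_zpow_conj_mul_mul_mul_inv, map_list_prod, List.map_map, Int.toNat_natCast,
          hcast, List.map_map]
        simp only [Function.comp_def, hBkl, Bel]
end

section
/- Let g : F(u,v) → Z ⋊ Z be the homomorphism with g(u) = (1,0) and g(v) = (0,1), where Z ⋊ Z has multiplication (a,b)·(c,d) = (a + (-1)^b c, b + d). Then the kernel of g is a free group with basis the set {B_{k,l} = v^k u^l (u v u v⁻¹) u^{-l} v^{-k} : k, l ∈ Z}. In particular ker g is a free group of countably infinite rank. -/
/-- The underlying set of the nontrivial semidirect product `ℤ ⋊ ℤ`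
(the fundamental group of the Klein bottle). -/
@[ext]
structure KB where
  a : ℤ
  b : ℤ

namespace KB

instance : Mul KB := ⟨fun x y => ⟨x.a + ((-1 : ℤˣ) ^ x.b : ℤˣ) * y.a, x.b + y.b⟩⟩
instance : One KB := ⟨⟨0, 0⟩⟩
instance : Inv KB := ⟨fun x => ⟨-(((-1 : ℤˣ) ^ x.b : ℤˣ) * x.a), -x.b⟩⟩

lemma mul_def (x y : KB) :
    x * y = ⟨x.a + ((-1 : ℤˣ) ^ x.b : ℤˣ) * y.a, x.b + y.b⟩ := rfl

lemma one_def : (1 : KB) = ⟨0, 0⟩ := rfl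

lemma inv_def (x : KB) :
    x⁻¹ = ⟨-(((-1 : ℤˣ) ^ x.b : ℤˣ) * x.a), -x.b⟩ := rfl

instance : Group KB :=
  Group.ofLeftAxioms
    (by
      rintro ⟨a, b⟩ ⟨c, d⟩ ⟨e, f⟩
      ext <;> simp [mul_def, zpow_add] <;> ring)
    (by rintro ⟨a, b⟩; ext <;> simp [mul_def, one_def])
    (by
      rintro ⟨a, b⟩
      ext <;> simp [mul_def, one_def, inv_def, zpow_neg])

end KB
namespace KleinBU

/-- The homomorphism `g : F(u,v) → ℤ ⋊ ℤ` with `g u = (1,0)` and `g v = (0,1)`. -/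
def g : FreeGroup Bool →* KB :=
  FreeGroup.lift (fun x => if x then ⟨1, 0⟩ else ⟨0, 1⟩)

end KleinBU

/-!
Reidemeister–Schreier for the transversal `{v ^ k * u ^ l}`, which `g` maps bijectively
onto `ℤ ⋊ ℤ`. Map `F(u,v)` to `F(ℤ ⋊ ℤ) ⋊ (ℤ ⋊ ℤ)`, where `ℤ ⋊ ℤ` permutes the generators `x_q`
by left translation, by `u ↦ (1, U)` and `v ↦ (x_1, V)`. The second coordinate of the image of
`w` is `g w`; the first records the Schreier generators met along `w`, `x_q` standing for the one
produced by reading `v` in the coset `q = V^k U^l`, namely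
`v^k u^l v u^l v^-(k+1) = B_{k,l-1} ⋯ B_{k,0}` (reading `u` produces none). Substituting these
products for the `x_q` and multiplying by the coset representative gives back `w`, so the
`B_{k,l}` generate `ker g`. Conversely the image of `B_{k,l}` is a conjugate of
`x_{V^k U^(l+1)} x_{V^k U^l}⁻¹` by an element that the substitution kills, so the substitution
sends it back to `B_{k,l}`: the `B_{k,l}` are free.
-/

namespace FreeGroup

variable {α : Type*}

def permToMulAut : Equiv.Perm α →* MulAut (FreeGroup α) where
  toFun := freeGroupCongr
  map_one' := freeGroupCongr_refl
  map_mul' e f := (freeGroupCongr_trans f e).symm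

lemma apply_mul_eq_of_forall_of {G H : Type*} [Group G] [Group H] (ψ : FreeGroup α →* G)
    (χ : FreeGroup α →* H) (T : G → H) (h : ∀ z a, T (z * ψ (of a)) = T z * χ (of a))
    (z : G) (x : FreeGroup α) : T (z * ψ x) = T z * χ x := by
  induction x using FreeGroup.induction_on generalizing z with
  | C1 => simp
  | of a => exact h z a
  | inv_of a ih =>
    have := ih (z * ψ (of a)⁻¹)
    rw [_root_.map_inv, inv_mul_cancel_right] at this
    rw [_root_.map_inv, _root_.map_inv, eq_mul_inv_iff_mul_eq, ← this]
  | mul x y ihx ihy => rw [_root_.map_mul, ← mul_assoc, ihy, ihx, _root_.map_mul, mul_assoc]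

end FreeGroup

lemma SemidirectProduct.mul_inl_mul_inv {N G : Type*} [Group N] [Group G] {φ : G →* MulAut N}
    (z : N ⋊[φ] G) (n : N) : z * inl n * z⁻¹ = inl (z.left * φ z.right n * z.left⁻¹) := by
  ext <;> simp

namespace KB

def U : KB := ⟨1, 0⟩
def V : KB := ⟨0, 1⟩

lemma mul_a (x y : KB) : (x * y).a = x.a + x.b.negOnePow * y.a := rfl
lemma mul_b (x y : KB) : (x * y).b = x.b + y.b := rfl

def vuEquiv : ℤ × ℤ ≃ KB where
  toFun p := ⟨p.1.negOnePow * p.2, p.1⟩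
  invFun q := (q.b, q.b.negOnePow * q.a)
  left_inv p := by simp [← mul_assoc, ← Units.val_mul, Int.units_mul_self]
  right_inv q := by ext <;> simp [← mul_assoc, ← Units.val_mul, Int.units_mul_self]

lemma vuEquiv_mul_U (k l : ℤ) : vuEquiv (k, l) * U = vuEquiv (k, l + 1) := by
  ext <;> simp [vuEquiv, U, mul_a, mul_b, mul_add]

lemma vuEquiv_mul_V (k l : ℤ) : vuEquiv (k, l) * V = vuEquiv (k + 1, -l) := by
  ext <;> simp [vuEquiv, V, mul_a, mul_b, Int.negOnePow_succ]

lemma vuEquiv_mul_U_zpow (k l m : ℤ) : vuEquiv (k, l) * U ^ m = vuEquiv (k, l + m) := by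
  induction m using Int.induction_on with
  | zero => simp
  | succ m ih => rw [zpow_add_one, ← mul_assoc, ih, vuEquiv_mul_U, add_assoc]
  | pred m ih =>
    rw [zpow_sub_one, ← mul_assoc, ih, mul_inv_eq_iff_eq_mul, vuEquiv_mul_U]
    ring_nf

lemma V_zpow (k : ℤ) : V ^ k = vuEquiv (k, 0) := by
  induction k using Int.induction_on with
  | zero => rfl
  | succ k ih => rw [zpow_add_one, ih, vuEquiv_mul_V, neg_zero]
  | pred k ih =>
    rw [zpow_sub_one, ih, mul_inv_eq_iff_eq_mul, vuEquiv_mul_V, sub_add_cancel, neg_zero]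

lemma U_mul_V_mul_U : U * V * U = V := by
  ext <;> rfl

lemma one_eq_vuEquiv : (1 : KB) = vuEquiv (0, 0) := rfl

end KB

namespace KleinBU

open SemidirectProduct KB

lemma g_u : g u = U := rfl
lemma g_v : g v = V := rfl

lemma g_v_zpow (k : ℤ) : g (v ^ k) = vuEquiv (k, 0) := by
  rw [map_zpow, g_v, V_zpow]

lemma g_Bkl (k l : ℤ) : g (Bkl k l) = 1 := by
  have g_Bel : g Bel = 1 := by
    rw [Bel, map_mul, map_inv, map_mul, map_mul, g_u, g_v, U_mul_V_mul_U, mul_inv_cancel]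
  simp only [Bkl, map_mul, map_zpow, g_Bel]
  group

def bHom : FreeGroup (ℤ × ℤ) →* FreeGroup Bool := FreeGroup.lift fun p => Bkl p.1 p.2

lemma bHom_of (k l : ℤ) : bHom (.of (k, l)) = Bkl k l := FreeGroup.lift_apply_of ..

lemma range_bHom_le_ker_g : bHom.range ≤ g.ker :=
  (MonoidHom.range_le_ker_iff _ _).2 <| FreeGroup.ext_hom _ _ fun ⟨k, l⟩ => by
    simpa [bHom_of] using g_Bkl k l

-- `of (k, l - 1) * ⋯ * of (k, 0)`, and `(of (k, l))⁻¹ * ⋯ * (of (k, -1))⁻¹` for `l < 0`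
def bWord (p : ℤ × ℤ) : FreeGroup (ℤ × ℤ) :=
  Int.inductionOn' p.2 0 1 (fun j _ w => .of (p.1, j) * w) (fun j _ w => (.of (p.1, j - 1))⁻¹ * w)

lemma bWord_zero (k : ℤ) : bWord (k, 0) = 1 := Int.inductionOn'_self

lemma bWord_add_one (k l : ℤ) : bWord (k, l + 1) = .of (k, l) * bWord (k, l) := by
  rcases le_or_gt 0 l with hl | hl
  · exact Int.inductionOn'_add_one hl
  · obtain ⟨m, rfl⟩ : ∃ m, l = m - 1 := ⟨l + 1, by ring⟩
    rw [sub_add_cancel]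
    unfold bWord
    rw [Int.inductionOn'_sub_one (by omega), mul_inv_cancel_left]

lemma bHom_bWord (k l : ℤ) : bHom (bWord (k, l)) = v ^ k * u ^ l * v * u ^ l * v ^ (-(k + 1)) := by
  induction l using Int.induction_on with
  | zero => rw [bWord_zero, map_one]; group
  | succ l ih => rw [bWord_add_one, map_mul, ih, bHom_of, Bkl, Bel]; group
  | pred l ih =>
    rw [← sub_add_cancel (-(l : ℤ)) 1, bWord_add_one, map_mul, bHom_of, Bkl, Bel] at ih
    rw [eq_inv_mul_of_mul_eq ih]
    group

def regularAct : KB →* MulAut (FreeGroup KB) :=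
  FreeGroup.permToMulAut.comp (MulAction.toPermHom KB KB)

@[simp]
lemma regularAct_of (q p : KB) : regularAct q (.of p) = .of (q * p) := rfl

@[simp]
lemma regularAct_symm_of (q p : KB) : (regularAct q).symm (.of p) = .of (q⁻¹ * p) := by
  rw [MulEquiv.symm_apply_eq, regularAct_of, mul_inv_cancel_left]

local notation "SD" => FreeGroup KB ⋊[regularAct] KB

def schreierHom : FreeGroup Bool →* SD :=
  FreeGroup.lift fun b => if b then inr U else inl (.of 1) * inr V

lemma schreierHom_u : schreierHom u = inr U := rfl
lemma schreierHom_v : schreierHom v = inl (.of 1) * inr V := rfl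

lemma right_schreierHom (x : FreeGroup Bool) : (schreierHom x).right = g x := by
  suffices rightHom.comp schreierHom = g from DFunLike.congr_fun this x
  refine FreeGroup.ext_hom _ _ fun b => ?_
  cases b <;> rfl

def bRewrite : FreeGroup KB →* FreeGroup (ℤ × ℤ) :=
  FreeGroup.lift fun q => bWord (vuEquiv.symm q)

lemma bRewrite_of_vuEquiv (p : ℤ × ℤ) : bRewrite (.of (vuEquiv p)) = bWord p := by
  simp [bRewrite]

def cosetRep (q : KB) : FreeGroup Bool := v ^ (vuEquiv.symm q).1 * u ^ (vuEquiv.symm q).2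

lemma cosetRep_vuEquiv (k l : ℤ) : cosetRep (vuEquiv (k, l)) = v ^ k * u ^ l := by simp [cosetRep]

def unwind (z : SD) : FreeGroup Bool := bHom (bRewrite z.left) * cosetRep z.right

lemma mul_schreierHom_u (z : SD) : z * schreierHom u = ⟨z.left, z.right * U⟩ := by
  ext <;> simp [schreierHom_u]

lemma mul_schreierHom_v (z : SD) : z * schreierHom v = ⟨z.left * .of z.right, z.right * V⟩ := by
  ext <;> simp [schreierHom_v]

lemma unwind_mul_schreierHom (z : SD) (x : FreeGroup Bool) :
    unwind (z * schreierHom x) = unwind z * x := by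
  refine FreeGroup.apply_mul_eq_of_forall_of schreierHom (.id _) unwind (fun z b => ?_) z x
  obtain ⟨⟨k, l⟩, hq⟩ := vuEquiv.surjective z.right
  cases b
  · change unwind (_ * schreierHom v) = _ * v
    rw [mul_schreierHom_v, unwind, unwind, ← hq, map_mul, map_mul, bRewrite_of_vuEquiv,
      bHom_bWord, vuEquiv_mul_V, cosetRep_vuEquiv, cosetRep_vuEquiv]
    group
  · change unwind (_ * schreierHom u) = _ * u
    rw [mul_schreierHom_u, unwind, unwind, ← hq, vuEquiv_mul_U, cosetRep_vuEquiv,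
      cosetRep_vuEquiv]
    group

lemma cosetRep_one : cosetRep 1 = 1 := by
  simp [cosetRep, one_eq_vuEquiv]

lemma unwind_schreierHom (x : FreeGroup Bool) : unwind (schreierHom x) = x := by
  simpa [unwind, cosetRep_one] using unwind_mul_schreierHom 1 x

lemma ker_g_le_range_bHom : g.ker ≤ bHom.range := by
  intro w hw
  refine ⟨bRewrite (schreierHom w).left, ?_⟩
  simpa [unwind, right_schreierHom, MonoidHom.mem_ker.1 hw, cosetRep_one] using
    unwind_schreierHom w

lemma bRewrite_left_schreierHom_v_zpow (k : ℤ) : bRewrite (schreierHom (v ^ k)).left = 1 := by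
  have step (k : ℤ) :
      bRewrite (schreierHom (v ^ (k + 1))).left = bRewrite (schreierHom (v ^ k)).left := by
    rw [zpow_add_one, map_mul, mul_schreierHom_v, right_schreierHom, g_v_zpow, map_mul,
      bRewrite_of_vuEquiv, bWord_zero, mul_one]
  induction k using Int.induction_on with
  | zero => simp
  | succ k ih => rw [step, ih]
  | pred k ih => rwa [← step, sub_add_cancel]

lemma schreierHom_Bel : schreierHom Bel = inl (.of U * (.of 1)⁻¹) := by
  ext <;> simp [Bel, schreierHom_u, schreierHom_v, ← mul_assoc, U_mul_V_mul_U]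

lemma bRewrite_left_schreierHom_Bkl (k l : ℤ) :
    bRewrite (schreierHom (Bkl k l)).left = .of (k, l) := by
  have hconj : Bkl k l = (v ^ k * u ^ l) * Bel * (v ^ k * u ^ l)⁻¹ := by rw [Bkl]; group
  have hleft : (schreierHom (v ^ k * u ^ l)).left = (schreierHom (v ^ k)).left := by
    rw [map_mul, map_zpow schreierHom u, schreierHom_u, ← map_zpow, mul_left, left_inr, map_one,
      mul_one]
  have hright : (schreierHom (v ^ k * u ^ l)).right = vuEquiv (k, l) := by
    rw [right_schreierHom, map_mul, g_v_zpow, map_zpow, g_u, vuEquiv_mul_U_zpow, zero_add]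
  rw [hconj, map_mul, map_mul, map_inv, schreierHom_Bel, mul_inl_mul_inv, left_inl, hleft, hright]
  rw [map_mul, map_mul, map_inv, bRewrite_left_schreierHom_v_zpow]
  simp [vuEquiv_mul_U, bRewrite_of_vuEquiv, bWord_add_one]

lemma bHom_injective : Function.Injective bHom := by
  let N : FreeGroup (ℤ × ℤ) →* FreeGroup KB :=
    FreeGroup.lift fun p => (schreierHom (Bkl p.1 p.2)).left
  have hN : schreierHom.comp bHom = inl.comp N := FreeGroup.ext_hom _ _ fun ⟨k, l⟩ => by
    refine SemidirectProduct.ext ?_ ?_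
    · simp [N, bHom_of]
    · simp [N, bHom_of, right_schreierHom, g_Bkl]
  have hN' : bRewrite.comp N = .id _ := FreeGroup.ext_hom _ _ fun ⟨k, l⟩ => by
    simp [N, bRewrite_left_schreierHom_Bkl]
  have : Function.LeftInverse (fun w => bRewrite (schreierHom w).left) bHom := fun x => by
    change bRewrite (schreierHom (bHom x)).left = x
    rw [← MonoidHom.comp_apply, hN, MonoidHom.comp_apply, left_inl, ← MonoidHom.comp_apply, hN',
      MonoidHom.id_apply]
  exact this.injective

end KleinBU

open KleinBU in
/-- The kernel of `g : F(u,v) → ℤ ⋊ ℤ` is a free group with basis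
`{B_{k,l} : k, l ∈ ℤ}`; in particular it is free of countably infinite rank. -/
theorem ker_g_free_basis_B :
    ∃ b : FreeGroupBasis (ℤ × ℤ) (MonoidHom.ker g),
      ∀ k l : ℤ, (b (k, l) : FreeGroup Bool) = Bkl k l := by
  have hrange : bHom.range = g.ker := le_antisymm range_bHom_le_ker_g ker_g_le_range_bHom
  let e := (MonoidHom.ofInjective bHom_injective).trans (MulEquiv.subgroupCongr hrange)
  exact ⟨.ofRepr e.symm, bHom_of⟩
end

section
/- Let F(u,v) be the free group on u, v and B = u v u v⁻¹. For every integer k ≥ 1, the commutator [v^{2k}, u] = v^{2k} u v^{-2k} u⁻¹ equals ∏_{i=1}^{k} (B_{2k-2i+1, -1} · B_{2k-2i, 0}⁻¹), where B_{p,q} = v^p u^q B u^{-q} v^{-p} and the product is in order of increasing i. -/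
open scoped commutatorElement

theorem commutatorElement_pow_left_eq_prod {G : Type*} [Group G] (a c : G) (n : ℕ) :
    ⁅a ^ n, c⁆ = ((List.range n).reverse.map fun i => a ^ i * ⁅a, c⁆ * (a ^ i)⁻¹).prod := by
  induction n with
  | zero => simp
  | succ n ih =>
    rw [List.range_succ, List.reverse_append, List.reverse_singleton, List.singleton_append,
      List.map_cons, List.prod_cons, ← ih, pow_succ, commutatorElement_mul_left_eq_conj_mul]

namespace KleinBU

theorem Bkl_odd_mul_inv_Bkl_even (j : ℕ) :
    Bkl (2 * j + 1) (-1) * (Bkl (2 * j) 0)⁻¹ = (v ^ 2) ^ j * ⁅v ^ 2, u⁆ * ((v ^ 2) ^ j)⁻¹ := by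
  simp only [Bkl, Bel, commutatorElement_def, ← zpow_natCast]
  push_cast
  group

end KleinBU

open KleinBU in
/-- For `k ≥ 1`, the commutator `[v^{2k}, u] = v^{2k} u v^{-2k} u⁻¹` equals the ordered
product `∏_{i=1}^{k} (B_{2k-2i+1, -1} · B_{2k-2i, 0}⁻¹)`. -/
theorem comm_v2k_u_eq_prod (k : ℤ) (hk : 1 ≤ k) :
    v ^ (2 * k) * u * v ^ (-(2 * k)) * u⁻¹
      = ((List.range k.toNat).map (fun i =>
          Bkl (2 * k - 2 * (i : ℤ) - 1) (-1) * (Bkl (2 * k - 2 * (i : ℤ) - 2) 0)⁻¹)).prod := by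
  obtain ⟨n, rfl⟩ : ∃ n : ℕ, k = n := ⟨k.toNat, by omega⟩
  have hcomm : v ^ (2 * (n : ℤ)) * u * v ^ (-(2 * (n : ℤ))) * u⁻¹ = ⁅(v ^ 2) ^ n, u⁆ := by
    rw [commutatorElement_def, ← pow_mul, zpow_neg, ← Nat.cast_ofNat, ← Nat.cast_mul, zpow_natCast]
  rw [hcomm, commutatorElement_pow_left_eq_prod, Int.toNat_natCast, List.range_eq_range',
    List.reverse_range', ← List.range_eq_range']
  -- the cast `(i : ℤ)` in the statement elaborates as a monadic lift of `List.range n` to `List ℤ`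
  simp only [List.pure_def, List.bind_eq_flatMap, ← List.map_eq_flatMap, List.map_map,
    Function.comp_def]
  refine congrArg List.prod (List.map_congr_left fun i hi => ?_)
  rw [List.mem_range] at hi
  rw [show 2 * (n : ℤ) - 2 * i - 1 = 2 * ↑(0 + n - 1 - i) + 1 by omega,
    show 2 * (n : ℤ) - 2 * i - 2 = 2 * ↑(0 + n - 1 - i) by omega, Bkl_odd_mul_inv_Bkl_even]
end
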